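/- For the discrete Liouville equation t_{uv} = (1/t)(t_u - 1)(t_v - 1), the function F_0 = (t_2/(t_1 - 1) + 1)((t - 1)/t_1 + 1) is a v-invariant: \bar{D}F_0 = F_0 on solutions. -/

import Mathlib

/-! Along the `v`-shift, `f₁/(f - 1) = (t₂ - 1)/t₁` and `(t_v - 1)/f = t/(t₁ - 1)`, so `D̄F₀` is
`F₀` with the two denominators `t₁` and `t₁ - 1` exchanged between the factors; both products
equal `(t₂ + t₁ - 1)(t + t₁ - 1) / (t₁ (t₁ - 1))`. -/

lemma div_one_div_mul_mul_self {K : Type*} [Field K] {x : K} (t y : K) (hx : x ≠ 0) :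
    x / (1 / t * y * x) = t / y := by
  rw [div_mul_cancel_right₀ hx, one_div_mul_eq_div, inv_div]

lemma div_sub_one_add_one_mul_sub_one_div_add_one {K : Type*} [Field K] (a b : K) {s : K}
    (hs : s ≠ 0) (hs1 : s ≠ 1) :
    (a / (s - 1) + 1) * ((b - 1) / s + 1) = ((a - 1) / s + 1) * (b / (s - 1) + 1) := by
  have hs1' : s - 1 ≠ 0 := sub_ne_zero.2 hs1
  field_simp
  ring

theorem stmt14 (t t1 t2 tv f f1 : ℝ)
    (ht1 : t1 ≠ 0)
    (hf : f = (1/t) * (t1 - 1) * (tv - 1))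
    (hf1 : f1 = (1/t1) * (t2 - 1) * (f - 1))
    (hf0 : f ≠ 0) (hfone : f ≠ 1) :
    (f1 / (f - 1) + 1) * ((tv - 1) / f + 1)
      = (t2 / (t1 - 1) + 1) * ((t - 1) / t1 + 1) := by
  have htv : tv - 1 ≠ 0 := fun h => hf0 (by rw [hf, h, mul_zero])
  have ht11 : t1 ≠ 1 := by
    rintro rfl
    exact hf0 (by rw [hf, sub_self, mul_zero, zero_mul])
  rw [hf1, mul_div_cancel_right₀ _ (sub_ne_zero.2 hfone), one_div_mul_eq_div, hf,
    div_one_div_mul_mul_self t _ htv]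
  exact (div_sub_one_add_one_mul_sub_one_div_add_one t2 t ht1 ht11).symm
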